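/- arXiv:2409.17658 — 2 statements merged into one kernel-verified Lean document; each statement's English description precedes it below -/
import Mathlib

section
/- For all integers m, n ≥ 10, every Roman dominating function f on the cylinder P_m □ C_n satisfies 5·(weight of f) ≥ 2mn + 2n; equivalently, the minimum loss ℒ(m,n) = (5/2)·γ_R(P_m □ C_n) − mn satisfies ℒ(m,n) ≥ n. -/
open SimpleGraph

/-- A Roman dominating function on `G`: every vertex with value `0` has a neighbor
with value `2`. -/
def IsRomanDominating {V : Type*} (G : SimpleGraph V) (f : V → Fin 3) : Prop :=
  ∀ v, f v = 0 → ∃ w, G.Adj v w ∧ f w = 2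

/-- The Roman domination number of a finite graph: the minimum weight
`∑ v, f v` of a Roman dominating function on `G`. -/
noncomputable def romanDominationNumber {V : Type*} [Fintype V] (G : SimpleGraph V) : ℕ :=
  sInf {k | ∃ f : V → Fin 3, IsRomanDominating G f ∧ ∑ v, (f v : ℕ) = k}

/-!
Discharging: a vertex with value `2` sends `2` to each vertex of its closed neighbourhood and a
vertex with value `1` keeps `5`, so that `v` receives `2 d(v) + 5 [f v = 1]`, where `d(v)` counts
the `2`s in the closed neighbourhood of `v`. Roman domination says exactly that every vertex
receives at least `2`, i.e. has nonnegative charge (what it receives, minus `2`). Hence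
`5 w(f) - 2mn` is the total charge plus `2` for every `2` on the two boundary rows, whose closed
neighbourhoods have only four vertices. Near each boundary the four outermost rows already carry
at least `n` of this: going around the cycle, what each column carries pays `1` plus the increment
of an explicit potential on pairs of consecutive columns, which only sees the positions of the
`2`s. The two boundary strips are disjoint since `m ≥ 8`.
-/

open Finset

namespace RomanCylinder

theorem natCast_le_sum_of_potential {n : ℕ} [NeZero n] {α : Type*} (x : Fin n → α)
    (φ : α → α → ℤ) (c : Fin n → ℤ)
    (h : ∀ j, 1 + φ (x j) (x (j + 1)) - φ (x (j - 1)) (x j) ≤ c j) :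
    (n : ℤ) ≤ ∑ j, c j := by
  have hshift : ∑ j, φ (x (j - 1)) (x j) = ∑ j, φ (x j) (x (j + 1)) := by
    rw [← Equiv.sum_comp (Equiv.addRight (1 : Fin n)) (fun j => φ (x (j - 1)) (x j))]
    simp
  calc (n : ℤ) = ∑ j, (1 + φ (x j) (x (j + 1)) - φ (x (j - 1)) (x j)) := by
        simp [sum_add_distrib, sum_sub_distrib, hshift]
    _ ≤ ∑ j, c j := sum_le_sum fun j _ => h j

theorem sum_range_comp_add_one_add {M : Type*} [AddCommMonoid M] (h : ℤ → M) (m : ℕ) :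
    ∑ i ∈ range m, h (i + 1) + h 0 = ∑ i ∈ range m, h i + h m := by
  induction m with
  | zero => simp
  | succ m ih =>
    rw [sum_range_succ, sum_range_succ, add_right_comm, ih]
    push_cast
    rfl

theorem sum_range_comp_sub_one_add {M : Type*} [AddCommMonoid M] (h : ℤ → M) (m : ℕ) :
    ∑ i ∈ range m, h (i - 1) + h (m - 1) = ∑ i ∈ range m, h i + h (-1) := by
  induction m with
  | zero => simp
  | succ m ih =>
    rw [sum_range_succ, sum_range_succ]
    push_cast
    rw [add_sub_cancel_right, ih, add_right_comm]

theorem sum_range_add_sum_range_reflect_le {M : Type*} [AddCommMonoid M] [PartialOrder M]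
    [IsOrderedAddMonoid M] {h : ℤ → M} {k m : ℕ} (hkm : 2 * k ≤ m)
    (hh : ∀ i < m, 0 ≤ h i) :
    ∑ i ∈ range k, h i + ∑ i ∈ range k, h (m - 1 - i) ≤ ∑ i ∈ range m, h i := by
  obtain ⟨l, rfl⟩ : ∃ l, m = k + l + k := ⟨m - 2 * k, by omega⟩
  have hreflect :
      ∑ i ∈ range k, h ((k + l + k : ℕ) - 1 - i) = ∑ i ∈ range k, h (k + l + i : ℕ) := by
    rw [← sum_range_reflect]
    exact sum_congr rfl fun i hi => congrArg h (by rw [mem_range] at hi; push_cast; omega)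
  rw [hreflect, sum_range_add, sum_range_add, add_right_comm]
  exact le_add_of_nonneg_right (sum_nonneg fun i hi => hh _ (by rw [mem_range] at hi; omega))

def two (x : Fin 3) : ℤ := if x = 2 then 1 else 0

def one (x : Fin 3) : ℤ := if x = 1 then 1 else 0

theorem two_nonneg (x : Fin 3) : 0 ≤ two x := by unfold two; split_ifs <;> norm_num

theorem natCast_eq_one_add_two_mul_two (x : Fin 3) : ((x : ℕ) : ℤ) = one x + 2 * two x := by
  fin_cases x <;> rfl

def charge (x : Fin 3) (d : ℤ) : ℤ := 2 * d + 5 * one x - 2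

theorem charge_nonneg {x : Fin 3} {d : ℤ} (hd : two x ≤ d) (hdom : x = 0 → 1 ≤ d) :
    0 ≤ charge x d := by
  have := two_nonneg x
  fin_cases x <;> simp_all [charge, one, two]
  omega

abbrev Column := Fin 3 × Fin 3 × Fin 3 × Fin 3

abbrev Pattern := Bool × Bool × Bool × Bool

def Column.pattern : Column → Pattern
  | (x₀, x₁, x₂, x₃) => (x₀ = 2, x₁ = 2, x₂ = 2, x₃ = 2)

def Pattern.toColumn : Pattern → Column
  | (p₀, p₁, p₂, p₃) => (cond p₀ 2 0, cond p₁ 2 0, cond p₂ 2 0, cond p₃ 2 0)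

def Pattern.toNat : Pattern → ℕ
  | (p₀, p₁, p₂, p₃) => 8 * p₀.toNat + 4 * p₁.toNat + 2 * p₂.toNat + p₃.toNat

-- The charges of the middle column of three consecutive columns of the rows `0, 1, 2, 3`, when
-- row `-1` is empty; the last one leaves out the neighbour in row `4`.
def windowCharges : Column → Column → Column → ℤ × ℤ × ℤ × ℤ
  | (l₀, l₁, l₂, l₃), (x₀, x₁, x₂, x₃), (r₀, r₁, r₂, r₃) =>
    (charge x₀ (two x₀ + two x₁ + two r₀ + two l₀),
      charge x₁ (two x₁ + two x₂ + two x₀ + two r₁ + two l₁),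
      charge x₂ (two x₂ + two x₃ + two x₁ + two r₂ + two l₂),
      charge x₃ (two x₃ + two x₂ + two r₃ + two l₃))

def WindowNonneg (L b R : Column) : Prop :=
  0 ≤ (windowCharges L b R).1 ∧ 0 ≤ (windowCharges L b R).2.1 ∧
    0 ≤ (windowCharges L b R).2.2.1

instance (L b R : Column) : Decidable (WindowNonneg L b R) :=
  inferInstanceAs (Decidable (_ ∧ _ ∧ _))

def windowLoss (L b R : Column) : ℤ :=
  2 * two b.1 + (windowCharges L b R).1 + (windowCharges L b R).2.1
    + (windowCharges L b R).2.2.1 + max 0 (windowCharges L b R).2.2.2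

-- A shortest-path potential on the digraph of pairs of consecutive column patterns: row `A` lists
-- the values at `B.toNat = 0, 1, …`, and missing entries are `5`.
def potential (A B : Pattern) : ℤ :=
  (match A with
    | (false, false, false, false) => [4, 4, 4, 4, 3, 3, 3, 3, 3, 3, 1, 1, 0, 0, 2, 2]
    | (false, false, false, true) => [4, 5, 5, 5, 3, 5, 5, 5, 1, 3, 3, 5, 3]
    | (false, false, true, false) => [1, 3, 3, 5, 3, 5, 5, 5, 3]
    | (false, true, false, false) => [2, 2, 4, 4, 4, 4, 5, 5, 4, 4]
    | (true, false, false, false) => [4, 4, 2, 4, 5, 5, 4, 5, 5, 5, 4]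
    | (false, true, false, true) | (true, false, false, true) | (true, false, true, false) => [4]
    | _ => []).getD B.toNat 5

theorem window_certificate : ∀ (L : Pattern) (b : Column) (R : Pattern),
    WindowNonneg L.toColumn b R.toColumn →
      1 + potential b.pattern R - potential L b.pattern ≤ windowLoss L.toColumn b R.toColumn := by
  decide +kernel

theorem two_cond_decide_eq_two (x : Fin 3) : two (cond (decide (x = 2)) 2 0) = two x := by
  fin_cases x <;> rfl

theorem windowCharges_pattern_toColumn (L b R : Column) :
    windowCharges L.pattern.toColumn b R.pattern.toColumn = windowCharges L b R := by
  obtain ⟨l₀, l₁, l₂, l₃⟩ := L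
  obtain ⟨r₀, r₁, r₂, r₃⟩ := R
  simp only [Column.pattern, Pattern.toColumn, windowCharges, two_cond_decide_eq_two]

theorem natCast_le_sum_windowLoss {n : ℕ} [NeZero n] (c : Fin n → Column)
    (h : ∀ j, WindowNonneg (c (j - 1)) (c j) (c (j + 1))) :
    (n : ℤ) ≤ ∑ j, windowLoss (c (j - 1)) (c j) (c (j + 1)) := by
  refine natCast_le_sum_of_potential (fun j => (c j).pattern) potential _ fun j => ?_
  have := window_certificate (c (j - 1)).pattern (c j) (c (j + 1)).pattern
  simp only [WindowNonneg, windowLoss, windowCharges_pattern_toColumn] at this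
  exact this (h j)

section Grid

variable {n : ℕ} [NeZero n]

def twosAround (g : ℤ → Fin n → Fin 3) (i : ℤ) (j : Fin n) : ℤ :=
  two (g i j) + two (g (i + 1) j) + two (g (i - 1) j) + two (g i (j + 1)) + two (g i (j - 1))

def cellCharge (g : ℤ → Fin n → Fin 3) (i : ℤ) (j : Fin n) : ℤ :=
  charge (g i j) (twosAround g i j)

theorem two_le_twosAround (g : ℤ → Fin n → Fin 3) (i : ℤ) (j : Fin n) :
    two (g i j) ≤ twosAround g i j := by
  unfold twosAround
  linarith [two_nonneg (g (i + 1) j), two_nonneg (g (i - 1) j), two_nonneg (g i (j + 1)),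
    two_nonneg (g i (j - 1))]

theorem two_le_twosAround_of_adj (g : ℤ → Fin n → Fin 3) {i i' : ℤ} {j j' : Fin n}
    (h : (i' = i + 1 ∨ i' = i - 1) ∧ j' = j ∨ i' = i ∧ (j' = j - 1 ∨ j' = j + 1)) :
    two (g i' j') ≤ twosAround g i j := by
  unfold twosAround
  rcases h with ⟨hi | hi, hj⟩ | ⟨hi, hj | hj⟩ <;> rw [hi, hj] <;>
    linarith [two_nonneg (g i j), two_nonneg (g (i + 1) j), two_nonneg (g (i - 1) j),
      two_nonneg (g i (j + 1)), two_nonneg (g i (j - 1))]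

theorem cellCharge_reflect (g : ℤ → Fin n → Fin 3) (k i : ℤ) (j : Fin n) :
    cellCharge (fun i => g (k - i)) i j = cellCharge g (k - i) j := by
  have hup : k - (i + 1) = k - i - 1 := by ring
  have hdown : k - (i - 1) = k - i + 1 := by ring
  simp only [cellCharge, twosAround, hup, hdown]
  ring_nf

theorem sum_two_comp_add_one (g : ℤ → Fin n → Fin 3) (i : ℤ) :
    ∑ j, two (g i (j + 1)) = ∑ j, two (g i j) :=
  Equiv.sum_comp (Equiv.addRight 1) fun j => two (g i j)

theorem sum_two_comp_sub_one (g : ℤ → Fin n → Fin 3) (i : ℤ) :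
    ∑ j, two (g i (j - 1)) = ∑ j, two (g i j) :=
  Equiv.sum_comp (Equiv.subRight 1) fun j => two (g i j)

theorem five_mul_sum_sub_eq_sum_cellCharge (g : ℤ → Fin n → Fin 3) (m : ℕ)
    (h_above : ∀ j, g (-1) j = 0) (h_below : ∀ j, g m j = 0) :
    5 * ∑ i ∈ range m, ∑ j, ((g i j : ℕ) : ℤ) - 2 * m * n =
      ∑ i ∈ range m, ∑ j, cellCharge g i j + 2 * ∑ j, two (g 0 j)
        + 2 * ∑ j, two (g (m - 1) j) := by
  set R : ℤ → ℤ := fun i => ∑ j, two (g i j)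
  set O : ℤ → ℤ := fun i => ∑ j, one (g i j)
  have hweight : ∀ i, ∑ j, ((g i j : ℕ) : ℤ) = O i + 2 * R i := fun i => by
    simp only [O, R, natCast_eq_one_add_two_mul_two, sum_add_distrib, mul_sum]
  have hcharge : ∀ i, ∑ j, cellCharge g i j = 6 * R i + 2 * R (i + 1) + 2 * R (i - 1) + 5 * O i
      - 2 * n := fun i => by
    simp only [cellCharge, charge, twosAround, sum_add_distrib, sum_sub_distrib, ← mul_sum,
      sum_two_comp_add_one, sum_two_comp_sub_one, sum_const, card_univ, Fintype.card_fin]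
    simp only [R, O]
    ring
  have hR_above : R (-1) = 0 := by simp [R, h_above, two]
  have hR_below : R m = 0 := by simp [R, h_below, two]
  have hup := sum_range_comp_add_one_add R m
  have hdown := sum_range_comp_sub_one_add R m
  simp only [hweight, hcharge, sum_add_distrib, sum_sub_distrib, ← mul_sum, sum_const,
    card_range, nsmul_eq_mul]
  linarith

def stripColumn (g : ℤ → Fin n → Fin 3) (j : Fin n) : Column :=
  (g 0 j, g 1 j, g 2 j, g 3 j)

theorem windowCharges_stripColumn (g : ℤ → Fin n → Fin 3) (h_above : ∀ j, g (-1) j = 0)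
    (j : Fin n) :
    windowCharges (stripColumn g (j - 1)) (stripColumn g j) (stripColumn g (j + 1)) =
      (cellCharge g 0 j, cellCharge g 1 j, cellCharge g 2 j,
        cellCharge g 3 j - 2 * two (g 4 j)) := by
  have h₀ : two (g (0 - 1) j) = 0 := by rw [zero_sub, h_above]; rfl
  simp only [windowCharges, stripColumn, cellCharge, twosAround, charge, h₀, Prod.mk.injEq]
  norm_num
  ring

theorem natCast_le_sum_top_strip (g : ℤ → Fin n → Fin 3) (h_above : ∀ j, g (-1) j = 0)
    (hg : ∀ i : ℤ, 0 ≤ i → i < 4 → ∀ j, 0 ≤ cellCharge g i j) :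
    (n : ℤ) ≤ 2 * ∑ j, two (g 0 j) + ∑ i ∈ range 4, ∑ j, cellCharge g i j := by
  have hwindow := natCast_le_sum_windowLoss (stripColumn g) fun j => by
    rw [WindowNonneg, windowCharges_stripColumn g h_above]
    exact ⟨hg 0 le_rfl (by norm_num) j, hg 1 (by norm_num) (by norm_num) j,
      hg 2 (by norm_num) (by norm_num) j⟩
  have hloss : ∀ j, windowLoss (stripColumn g (j - 1)) (stripColumn g j) (stripColumn g (j + 1))
      ≤ 2 * two (g 0 j) + ∑ i ∈ range 4, cellCharge g i j := fun j => by
    rw [windowLoss, windowCharges_stripColumn g h_above]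
    have h₃ := hg 3 (by norm_num) (by norm_num) j
    have := two_nonneg (g 4 j)
    simp only [sum_range_succ, sum_range_zero, stripColumn]
    push_cast
    have : max 0 (cellCharge g 3 j - 2 * two (g 4 j)) ≤ cellCharge g 3 j :=
      max_le h₃ (by linarith)
    linarith
  calc (n : ℤ) ≤ _ := hwindow
    _ ≤ ∑ j, (2 * two (g 0 j) + ∑ i ∈ range 4, cellCharge g i j) :=
        sum_le_sum fun j _ => hloss j
    _ = _ := by rw [sum_add_distrib, ← mul_sum, sum_comm]

end Grid

theorem eq_sub_one_or_eq_add_one_of_cycleGraph_adj {n : ℕ} [NeZero n] {u v : Fin n}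
    (h : (cycleGraph n).Adj u v) : v = u - 1 ∨ v = u + 1 := by
  obtain _ | _ | k := n
  · exact u.elim0
  · exact (cycleGraph_one_adj h).elim
  · have hv : v ∈ (cycleGraph (k + 2)).neighborSet u := h
    simpa [cycleGraph_neighborSet] using hv

section Cylinder

variable {m n : ℕ}

def extendRows (f : Fin m × Fin n → Fin 3) (i : ℤ) (j : Fin n) : Fin 3 :=
  if h : 0 ≤ i ∧ i < m then f (⟨i.toNat, by omega⟩, j) else 0

theorem extendRows_natCast (f : Fin m × Fin n → Fin 3) (i : Fin m) (j : Fin n) :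
    extendRows f i j = f (i, j) := by
  simp [extendRows]

theorem extendRows_eq_zero (f : Fin m × Fin n → Fin 3) {i : ℤ} (hi : i < 0 ∨ m ≤ i)
    (j : Fin n) : extendRows f i j = 0 := by
  rw [extendRows, dif_neg (by omega)]

theorem sum_natCast_eq_sum_range_extendRows (f : Fin m × Fin n → Fin 3) :
    ∑ v, ((f v : ℕ) : ℤ) = ∑ i ∈ range m, ∑ j, ((extendRows f i j : ℕ) : ℤ) := by
  rw [← Fin.sum_univ_eq_sum_range (fun i => ∑ j, ((extendRows f i j : ℕ) : ℤ)),
    Fintype.sum_prod_type]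
  simp only [extendRows_natCast]

variable [NeZero n]

theorem one_le_twosAround_of_isRomanDominating {f : Fin m × Fin n → Fin 3}
    (hf : IsRomanDominating ((pathGraph m).boxProd (cycleGraph n)) f) {v : Fin m × Fin n}
    (hv : f v = 0) : 1 ≤ twosAround (extendRows f) v.1 v.2 := by
  obtain ⟨w, hadj, hw⟩ := hf v hv
  have hgrid : (((w.1 : ℕ) : ℤ) = v.1 + 1 ∨ ((w.1 : ℕ) : ℤ) = v.1 - 1) ∧ w.2 = v.2 ∨
      ((w.1 : ℕ) : ℤ) = v.1 ∧ (w.2 = v.2 - 1 ∨ w.2 = v.2 + 1) := by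
    rw [boxProd_adj, pathGraph_adj] at hadj
    rcases hadj with ⟨hrow, hcol⟩ | ⟨hcol, hrow⟩
    · exact Or.inl ⟨by omega, hcol.symm⟩
    · exact Or.inr ⟨by rw [hrow], eq_sub_one_or_eq_add_one_of_cycleGraph_adj hcol⟩
  calc 1 = two (extendRows f w.1 w.2) := by rw [extendRows_natCast, hw]; rfl
    _ ≤ _ := two_le_twosAround_of_adj _ hgrid

theorem cellCharge_extendRows_nonneg {f : Fin m × Fin n → Fin 3}
    (hf : IsRomanDominating ((pathGraph m).boxProd (cycleGraph n)) f) {i : ℤ} (hi₀ : 0 ≤ i)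
    (him : i < m) (j : Fin n) : 0 ≤ cellCharge (extendRows f) i j := by
  lift i to ℕ using hi₀
  have hfij : extendRows f i j = f (⟨i, by omega⟩, j) := extendRows_natCast f ⟨i, _⟩ j
  refine charge_nonneg (two_le_twosAround _ _ _) fun h0 => ?_
  exact one_le_twosAround_of_isRomanDominating hf (v := (⟨i, by omega⟩, j)) (hfij ▸ h0)

end Cylinder

end RomanCylinder

open RomanCylinder

/-- for `m, n ≥ 10`, every Roman dominating function `f` on `P_m □ C_n`
satisfies `5 · weight(f) ≥ 2mn + 2n` (equivalently, the minimum loss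
`ℒ(m,n) = (5/2)·γ_R(P_m □ C_n) − mn` satisfies `ℒ(m,n) ≥ n`). -/
theorem five_mul_weight_ge_of_isRomanDominating (m n : ℕ) (hm : 10 ≤ m) (hn : 10 ≤ n)
    (f : Fin m × Fin n → Fin 3)
    (hf : IsRomanDominating ((pathGraph m).boxProd (cycleGraph n)) f) :
    5 * ∑ v, (f v : ℕ) ≥ 2 * m * n + 2 * n := by
  have : NeZero n := ⟨by omega⟩
  set g := extendRows f
  have hg : ∀ i : ℤ, 0 ≤ i → i < m → ∀ j, 0 ≤ cellCharge g i j :=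
    fun i hi₀ him => cellCharge_extendRows_nonneg hf hi₀ him
  have h_above : ∀ j, g (-1) j = 0 := extendRows_eq_zero f (by omega)
  have h_below : ∀ j, g m j = 0 := extendRows_eq_zero f (by omega)
  have hidentity := five_mul_sum_sub_eq_sum_cellCharge g m h_above h_below
  have htop := natCast_le_sum_top_strip g h_above fun i hi₀ hi₄ => hg i hi₀ (by omega)
  have hbottom := natCast_le_sum_top_strip (fun i => g (m - 1 - i)) (by simpa using h_below)
    fun i hi₀ hi₄ j => by rw [cellCharge_reflect]; exact hg _ (by omega) (by omega) j
  simp only [cellCharge_reflect, sub_zero] at hbottom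
  have hstrips := sum_range_add_sum_range_reflect_le (k := 4) (m := m)
    (h := fun i => ∑ j, cellCharge g i j) (by omega)
    fun i hi => sum_nonneg fun j _ => hg i (by omega) (by omega) j
  zify
  rw [sum_natCast_eq_sum_range_extendRows]
  linarith
end

section
/- For all integers m, n ≥ 10 with n ≡ 0 (mod 5), there is a Roman dominating function on the cylinder P_m □ C_n of weight 2(m+1)n/5; consequently γ_R(P_m □ C_n) ≤ 2(m+1)n/5. -/
open SimpleGraph

/-!
The cells `(i, j)` with `j ≡ 2 i (mod 5)` form a perfect dominating set of the grid `ℤ × ℤ`: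
if the offset `c = j - 2 i (mod 5)` of a cell is nonzero then `c ∈ {±1, ±2}`, and the neighbour
`(i, j ∓ 1)`, resp. `(i ± 1, j)`, has offset `0`. As `5 ∣ n`, the pattern is well defined on the
cylinder `P_m □ C_n`, where only the cells of offset `-2` in the first row and of offset `2` in
the last row lose their dominator. Giving those cells value `1` and the pattern cells value `2`
yields weight `2 · mn/5 + 2 · n/5`.
-/

open Finset

theorem IsRomanDominating.romanDominationNumber_le {V : Type*} [Fintype V] {G : SimpleGraph V}
    {f : V → Fin 3} (hf : IsRomanDominating G f) : romanDominationNumber G ≤ ∑ v, (f v : ℕ) :=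
  Nat.sInf_le ⟨f, hf, rfl⟩

theorem cycleGraph_adj_add_one {n : ℕ} [NeZero n] (hn : 2 ≤ n) (j : Fin n) :
    (cycleGraph n).Adj j (j + 1) := by
  obtain ⟨k, rfl⟩ : ∃ k, n = k + 2 := ⟨n - 2, by omega⟩
  exact cycleGraph_adj.2 (Or.inr (add_sub_cancel_left j 1))

theorem Fin.natCast_val_add_one_zmod {n d : ℕ} [NeZero n] (hd : d ∣ n) (j : Fin n) :
    (((j + 1 : Fin n) : ℕ) : ZMod d) = (j : ℕ) + 1 := by
  have h : (j + 1 : Fin n).val ≡ (j : ℕ) + 1 [MOD d] := by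
    rw [Fin.val_add, Fin.val_one']
    exact ((Nat.mod_modEq _ n).trans ((Nat.mod_modEq 1 n).add_left _)).of_dvd hd
  exact_mod_cast (ZMod.natCast_eq_natCast_iff _ _ _).2 h

theorem Fin.sum_natCast_val_zmod {M : Type*} [AddCommMonoid M] {d : ℕ} [NeZero d]
    (g : ZMod d → M) : ∑ c : Fin d, g (c : ℕ) = ∑ c, g c := by
  obtain ⟨k, rfl⟩ : ∃ k, d = k + 1 := ⟨d - 1, by have := NeZero.pos d; omega⟩
  exact Fintype.sum_congr _ _ fun c => congrArg g (ZMod.natCast_zmod_val (n := k + 1) c)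

theorem Fin.sum_natCast_val_zmod_of_dvd {M : Type*} [AddCommMonoid M] {n d : ℕ} [NeZero d]
    (hd : d ∣ n) (g : ZMod d → M) : ∑ j : Fin n, g (j : ℕ) = (n / d) • ∑ c, g c := by
  obtain ⟨t, rfl⟩ := hd
  rw [Nat.mul_div_cancel_left t (NeZero.pos d), mul_comm d t,
    ← (finProdFinEquiv : Fin t × Fin d ≃ Fin (t * d)).sum_comp, Fintype.sum_prod_type]
  simp [finProdFinEquiv, Fin.sum_natCast_val_zmod]

namespace Cylinder

variable {m n : ℕ}

def diagonalOffset (v : Fin m × Fin n) : ZMod 5 := (v.2 : ℕ) - 2 * (v.1 : ℕ)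

theorem diagonalOffset_add_one_right [NeZero n] (h5 : 5 ∣ n) (i : Fin m) (j : Fin n) :
    diagonalOffset (i, j + 1) = diagonalOffset (i, j) + 1 := by
  simp only [diagonalOffset, Fin.natCast_val_add_one_zmod h5]
  ring

theorem diagonalOffset_of_val_add_one_left {i i' : Fin m} (h : (i : ℕ) + 1 = i') (j : Fin n) :
    diagonalOffset (i', j) = diagonalOffset (i, j) - 2 := by
  simp only [diagonalOffset, ← h]
  push_cast
  ring

/-- `top` and `bottom` mark the boundary rows, whose cells of offset `-2`, resp. `2`, have their
dominator outside the cylinder. -/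
def offsetValue (top bottom : Prop) [Decidable top] [Decidable bottom] (c : ZMod 5) : Fin 3 :=
  if c = 0 then 2 else if (top ∧ c = -2) ∨ (bottom ∧ c = 2) then 1 else 0

theorem sum_offsetValue (top bottom : Prop) [Decidable top] [Decidable bottom] :
    ∑ c, (offsetValue top bottom c : ℕ) =
      2 + (if top then 1 else 0) + (if bottom then 1 else 0) := by
  by_cases top <;> by_cases bottom <;> simp [offsetValue, *] <;> decide

def romanFunction (m n : ℕ) (v : Fin m × Fin n) : Fin 3 :=
  offsetValue ((v.1 : ℕ) = 0) ((v.1 : ℕ) = m - 1) (diagonalOffset v)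

theorem sum_romanFunction (hm : 0 < m) (h5 : 5 ∣ n) :
    ∑ v, (romanFunction m n v : ℕ) = 2 * (m + 1) * n / 5 := by
  have row (i : Fin m) : ∑ j, (romanFunction m n (i, j) : ℕ) =
      n / 5 * (2 + (if (i : ℕ) = 0 then 1 else 0) + (if (i : ℕ) = m - 1 then 1 else 0)) := by
    rw [← sum_offsetValue, ← (Equiv.subRight (2 * (i : ℕ) : ZMod 5)).sum_comp,
      ← smul_eq_mul, ← Fin.sum_natCast_val_zmod_of_dvd h5]
    rfl
  have boundary : ∑ i : Fin m,
      (2 + (if (i : ℕ) = 0 then 1 else 0) + (if (i : ℕ) = m - 1 then 1 else 0)) = 2 * (m + 1) := by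
    rw [Fin.sum_univ_eq_sum_range (fun i => 2 + (if i = 0 then 1 else 0) +
      (if i = m - 1 then 1 else 0)), sum_add_distrib, sum_add_distrib, sum_ite_eq', sum_ite_eq']
    simp only [sum_const, card_range, smul_eq_mul, mem_range]
    rw [if_pos hm, if_pos (by omega)]
    ring
  rw [Fintype.sum_prod_type, Fintype.sum_congr _ _ row, ← mul_sum, boundary,
    Nat.mul_div_assoc _ h5]
  ring

theorem romanFunction_eq_two {v : Fin m × Fin n} (hv : diagonalOffset v = 0) :
    romanFunction m n v = 2 := by
  simp [romanFunction, offsetValue, hv]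

theorem isRomanDominating_romanFunction (h5 : 5 ∣ n) :
    IsRomanDominating ((pathGraph m).boxProd (cycleGraph n)) (romanFunction m n) := by
  rintro ⟨i, j⟩ hv
  have : NeZero n := ⟨j.pos.ne'⟩
  have hn : 2 ≤ n := le_trans (by norm_num) (Nat.le_of_dvd j.pos h5)
  have hc0 : diagonalOffset (i, j) ≠ 0 := fun hc => by
    simp [romanFunction_eq_two hc] at hv
  have nonzero : ∀ c : ZMod 5, c ≠ 0 → c = 1 ∨ c = -1 ∨ c = 2 ∨ c = -2 := by decide
  obtain hc | hc | hc | hc := nonzero _ hc0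
  · refine ⟨(i, j - 1), boxProd_adj_right.2 ?_, romanFunction_eq_two ?_⟩
    · simpa using (cycleGraph_adj_add_one hn (j - 1)).symm
    · have := diagonalOffset_add_one_right h5 i (j - 1)
      rw [sub_add_cancel, hc] at this
      linear_combination -this
  · refine ⟨(i, j + 1), boxProd_adj_right.2 (cycleGraph_adj_add_one hn j),
      romanFunction_eq_two ?_⟩
    rw [diagonalOffset_add_one_right h5, hc, neg_add_cancel]
  · by_cases hi : (i : ℕ) + 1 < m
    · refine ⟨(⟨i + 1, hi⟩, j), boxProd_adj_left.2 (pathGraph_adj.2 (Or.inl rfl)),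
        romanFunction_eq_two ?_⟩
      rw [diagonalOffset_of_val_add_one_left rfl, hc, sub_self]
    · have : (i : ℕ) = m - 1 := by omega
      simp +decide [romanFunction, offsetValue, hc, this] at hv
  · by_cases hi : (i : ℕ) = 0
    · simp +decide [romanFunction, offsetValue, hc, hi] at hv
    · have hi' : (i : ℕ) - 1 + 1 = i := by omega
      refine ⟨(⟨i - 1, by omega⟩, j), boxProd_adj_left.2 (pathGraph_adj.2 (Or.inr hi')),
        romanFunction_eq_two ?_⟩
      have := diagonalOffset_of_val_add_one_left (i := ⟨i - 1, by omega⟩) hi' j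
      rw [hc] at this
      linear_combination -this

end Cylinder

theorem exists_isRomanDominating_weight_cylinder_general (m n : ℕ) (hm : 10 ≤ m)
    (h5 : n % 5 = 0) :
    (∃ f : Fin m × Fin n → Fin 3,
        IsRomanDominating ((pathGraph m).boxProd (cycleGraph n)) f ∧
        ∑ v, (f v : ℕ) = 2 * (m + 1) * n / 5) ∧
      romanDominationNumber ((pathGraph m).boxProd (cycleGraph n)) ≤ 2 * (m + 1) * n / 5 := by
  have h5 : 5 ∣ n := Nat.dvd_of_mod_eq_zero h5
  have hdom := Cylinder.isRomanDominating_romanFunction (m := m) h5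
  have hweight := Cylinder.sum_romanFunction (m := m) (by omega) h5
  exact ⟨⟨_, hdom, hweight⟩, hweight ▸ hdom.romanDominationNumber_le⟩

/-- for `m, n ≥ 10` with `n ≡ 0 (mod 5)`, there is a Roman dominating
function on `P_m □ C_n` of weight `2(m+1)n/5` (the division is exact since `5 ∣ n`);
consequently `γ_R(P_m □ C_n) ≤ 2(m+1)n/5`. -/
theorem exists_isRomanDominating_weight_cylinder (m n : ℕ) (hm : 10 ≤ m) (hn : 10 ≤ n)
    (h5 : n % 5 = 0) :
    (∃ f : Fin m × Fin n → Fin 3,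
        IsRomanDominating ((pathGraph m).boxProd (cycleGraph n)) f ∧
        ∑ v, (f v : ℕ) = 2 * (m + 1) * n / 5) ∧
      romanDominationNumber ((pathGraph m).boxProd (cycleGraph n)) ≤ 2 * (m + 1) * n / 5 :=
  exists_isRomanDominating_weight_cylinder_general m n hm h5
end
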